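/- arXiv:2509.23085 — 4 statements merged into one kernel-verified Lean document; each statement's English description precedes it below -/
import Mathlib

section
/- Let f be an odd-sigmoid function with ω := 1/f'(0), and for a > ω define φ_a(x) := f(a x). Then φ_a has exactly three fixed points: 0, ξ_a, and -ξ_a, for some ξ_a > 0. -/
open Set Filter Topology

def OddSigmoid (f : ℝ → ℝ) : Prop :=
  ContDiff ℝ 1 f ∧ (∀ x, f (-x) = -f x) ∧ (∃ M, ∀ x, |f x| ≤ M) ∧
    (∀ x, 0 < deriv f x) ∧ StrictAntiOn (deriv f) (Set.Ici 0)

/-!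
A positive fixed point of `φ_a` is a point `y = a x > 0` with `f y / y = 1 / a`. Since `f` is
strictly concave on `[0, ∞)` with `f 0 = 0`, the slope `f y / y` is strictly decreasing there, so
there is at most one such point; it exists by the intermediate value theorem, because the slope
tends to `f'(0) > 1 / a` at `0⁺` and `f` is bounded. Oddness transfers this to `x < 0`.
-/

theorem StrictConcaveOn.strictAntiOn_div_self_Ioi {𝕜 : Type*} [Field 𝕜] [LinearOrder 𝕜]
    [IsStrictOrderedRing 𝕜] {f : 𝕜 → 𝕜} (hf : StrictConcaveOn 𝕜 (Ici 0) f) (h0 : f 0 = 0) :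
    StrictAntiOn (fun x ↦ f x / x) (Ioi 0) := by
  intro x hx y hy hxy
  simpa [h0] using hf.secant_strict_mono self_mem_Ici (le_of_lt hx) (le_of_lt hy)
    (ne_of_gt hx) (ne_of_gt hy) hxy

namespace OddSigmoid

variable {f : ℝ → ℝ}

theorem map_neg (hf : OddSigmoid f) (x : ℝ) : f (-x) = -f x := hf.2.1 x

theorem deriv_pos (hf : OddSigmoid f) (x : ℝ) : 0 < deriv f x := hf.2.2.2.1 x

theorem deriv_strictAntiOn (hf : OddSigmoid f) : StrictAntiOn (deriv f) (Ici 0) := hf.2.2.2.2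

theorem exists_le_bound (hf : OddSigmoid f) : ∃ M, ∀ x, f x ≤ M :=
  let ⟨M, hM⟩ := hf.2.2.1
  ⟨M, fun x ↦ (abs_le.1 (hM x)).2⟩

theorem pos_of_one_div_deriv_lt (hf : OddSigmoid f) {a : ℝ} (haw : 1 / deriv f 0 < a) : 0 < a :=
  (one_div_pos.2 (hf.deriv_pos 0)).trans haw

theorem differentiable (hf : OddSigmoid f) : Differentiable ℝ f :=
  hf.1.differentiable one_ne_zero

theorem map_zero (hf : OddSigmoid f) : f 0 = 0 := by
  have h := hf.map_neg 0
  rw [neg_zero] at h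
  linarith

theorem strictConcaveOn (hf : OddSigmoid f) : StrictConcaveOn ℝ (Ici 0) f := by
  refine StrictAntiOn.strictConcaveOn_of_deriv (convex_Ici 0)
    hf.differentiable.continuous.continuousOn ?_
  rw [interior_Ici]
  exact hf.deriv_strictAntiOn.mono Ioi_subset_Ici_self

theorem eq_of_map_mul_eq (hf : OddSigmoid f) {a x y : ℝ} (ha : 0 < a) (hx : 0 < x) (hy : 0 < y)
    (hfx : f (a * x) = x) (hfy : f (a * y) = y) : x = y := by
  have hslope : ∀ z, 0 < z → f (a * z) = z → f (a * z) / (a * z) = a⁻¹ := by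
    intro z hz hfz
    rw [hfz]
    field_simp
  have h := (hf.strictConcaveOn.strictAntiOn_div_self_Ioi hf.map_zero).injOn
    (mul_pos ha hx) (mul_pos ha hy) ((hslope x hx hfx).trans (hslope y hy hfy).symm)
  exact mul_left_cancel₀ ha.ne' h

theorem exists_pos_map_mul_eq (hf : OddSigmoid f) {a : ℝ} (haw : 1 / deriv f 0 < a) :
    ∃ ξ, 0 < ξ ∧ f (a * ξ) = ξ := by
  have ha := hf.pos_of_one_div_deriv_lt haw
  have hcont : Continuous fun x ↦ f (a * x) - x := by
    have := hf.differentiable.continuous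
    fun_prop
  obtain ⟨ε, hε, hfε⟩ : ∃ ε, 0 < ε ∧ ε < f (a * ε) := by
    have hslope := (hf.differentiable 0).hasDerivAt.tendsto_slope_zero_right
    have hlt : 1 / a < deriv f 0 := (one_div_lt (hf.deriv_pos 0) ha).1 haw
    obtain ⟨y, hy, hy0⟩ :=
      ((hslope.eventually (lt_mem_nhds hlt)).and self_mem_nhdsWithin).exists
    simp only [zero_add, hf.map_zero, sub_zero, smul_eq_mul] at hy
    refine ⟨y / a, div_pos hy0 ha, ?_⟩
    rw [mul_div_cancel₀ y ha.ne']
    rwa [lt_inv_mul_iff₀ hy0, mul_one_div] at hy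
  obtain ⟨b, hεb, hfb⟩ : ∃ b, ε < b ∧ f (a * b) < b := by
    obtain ⟨M, hM⟩ := hf.exists_le_bound
    refine ⟨max ε M + 1, by linarith [le_max_left ε M], ?_⟩
    linarith [hM (a * (max ε M + 1)), le_max_right ε M]
  obtain ⟨ξ, hξ, hfξ⟩ := intermediate_value_Icc' hεb.le hcont.continuousOn
    (show (0 : ℝ) ∈ Icc _ _ from ⟨by linarith, by linarith⟩)
  exact ⟨ξ, hε.trans_le hξ.1, sub_eq_zero.1 hfξ⟩

end OddSigmoid

theorem stmt_4 (f : ℝ → ℝ) (hf : OddSigmoid f) (a : ℝ) (haw : 1 / deriv f 0 < a) :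
    ∃ ξ : ℝ, 0 < ξ ∧ ∀ x : ℝ, f (a * x) = x ↔ x = 0 ∨ x = ξ ∨ x = -ξ := by
  have ha := hf.pos_of_one_div_deriv_lt haw
  obtain ⟨ξ, hξ, hfξ⟩ := hf.exists_pos_map_mul_eq haw
  have hodd : ∀ x, f (a * -x) = -f (a * x) := fun x ↦ by rw [mul_neg, hf.map_neg]
  refine ⟨ξ, hξ, fun x ↦ ⟨fun hfx ↦ ?_, ?_⟩⟩
  · rcases lt_trichotomy x 0 with hneg | hzero | hpos
    · refine Or.inr (Or.inr (neg_eq_iff_eq_neg.1 ?_))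
      exact hf.eq_of_map_mul_eq ha (neg_pos.2 hneg) hξ (by rw [hodd, hfx]) hfξ
    · exact Or.inl hzero
    · exact Or.inr (Or.inl (hf.eq_of_map_mul_eq ha hpos hξ hfx hfξ))
  · rintro (rfl | rfl | rfl)
    · rw [mul_zero, hf.map_zero]
    · exact hfξ
    · rw [hodd, hfξ]
end

section
/- Let f be an odd-sigmoid function with ω := 1/f'(0). Fix 0 < a ≤ ω and x₀ > 0, and define x_{n+1} = f(a x_n). Then x_n → 0 as n → ∞. -/
/-! Since `f'` is largest at `0`, `f t < f'(0) t ≤ t / a` for `t > 0`, so `t ↦ f (a t)` maps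
`(0, ∞)` into itself strictly below the identity. The orbit therefore decreases to a limit,
which by continuity is a fixed point of this map and hence `0`. -/

open Set Filter Topology

theorem tendsto_zero_of_lt_self {g : ℝ → ℝ} (hg : Continuous g) (hg_pos : ∀ t, 0 < t → 0 < g t)
    (hg_lt : ∀ t, 0 < t → g t < t) {x : ℕ → ℝ} (hx0 : 0 < x 0)
    (hrec : ∀ n, x (n + 1) = g (x n)) : Tendsto x atTop (𝓝 0) := by
  have hpos : ∀ n, 0 < x n := by
    intro n
    induction n with
    | zero => exact hx0
    | succ n ih => exact hrec n ▸ hg_pos _ ih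
  have hanti : Antitone x :=
    antitone_nat_of_succ_le fun n => (hrec n ▸ hg_lt _ (hpos n)).le
  have hlim : Tendsto x atTop (𝓝 (⨅ n, x n)) :=
    tendsto_atTop_ciInf hanti ⟨0, forall_mem_range.2 fun n => (hpos n).le⟩
  set L := ⨅ n, x n
  have hfix : g L = L := by
    refine tendsto_nhds_unique ((hg.tendsto L).comp hlim) ?_
    simpa only [Function.comp_def, ← hrec] using hlim.comp (tendsto_add_atTop_nat 1)
  obtain hL | hL := (le_ciInf fun n => (hpos n).le : 0 ≤ L).lt_or_eq
  · exact absurd hfix (hg_lt L hL).ne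
  · rwa [hL]

namespace OddSigmoid

variable {f : ℝ → ℝ}

theorem strictMono (hf : OddSigmoid f) : StrictMono f :=
  strictMono_of_deriv_pos hf.2.2.2.1

/-- By the mean value theorem `f t = f' c * t` for some `c ∈ (0, t)`, and `f' c < f' 0`. -/
theorem lt_deriv_zero_mul (hf : OddSigmoid f) {t : ℝ} (ht : 0 < t) : f t < deriv f 0 * t := by
  obtain ⟨c, ⟨hc, -⟩, hslope⟩ := exists_deriv_eq_slope f ht
    hf.differentiable.continuous.continuousOn hf.differentiable.differentiableOn
  have hft : f t = deriv f c * t := by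
    rw [hslope, hf.map_zero, sub_zero, sub_zero, div_mul_cancel₀ _ ht.ne']
  rw [hft]
  exact mul_lt_mul_of_pos_right (hf.2.2.2.2 self_mem_Ici hc.le hc) ht

end OddSigmoid

theorem stmt_5 (f : ℝ → ℝ) (hf : OddSigmoid f) (a : ℝ) (ha : 0 < a)
    (haw : a ≤ 1 / deriv f 0) (x : ℕ → ℝ) (hx0 : 0 < x 0)
    (hrec : ∀ n, x (n + 1) = f (a * x n)) :
    Filter.Tendsto x Filter.atTop (nhds 0) := by
  have had : a * deriv f 0 ≤ 1 := (le_div_iff₀ (hf.2.2.2.1 0)).mp haw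
  refine tendsto_zero_of_lt_self (g := fun t => f (a * t))
    (hf.differentiable.continuous.comp (continuous_const.mul continuous_id))
    (fun t ht => hf.map_zero ▸ hf.strictMono (mul_pos ha ht)) (fun t ht => ?_) hx0 hrec
  calc f (a * t) < deriv f 0 * (a * t) := hf.lt_deriv_zero_mul (mul_pos ha ht)
    _ = (a * deriv f 0) * t := by ring
    _ ≤ t := mul_le_of_le_one_left ht.le had
end

section
/- Let f be an odd-sigmoid function with ω := 1/f'(0). Fix a > ω and x₀ > 0, and define x_{n+1} = f(a x_n). Then x_n converges to ξ_a, the unique positive solution of f(a ξ) = ξ. -/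
open Set Filter Topology

/- Strict concavity of `f` on `[0, ∞)` together with `f 0 = 0` makes the slope `f u / u`
strictly decreasing for `u > 0`, so the map `g y = f (a y)` lies strictly above the diagonal on
`(0, ξ)` and strictly below it on `(ξ, ∞)`. Since `g` is increasing, an orbit starting below `ξ`
increases and stays below `ξ`, one starting above decreases and stays above; either way it converges
to a fixed point of `g` on the same side of `ξ`, which can only be `ξ` itself. -/

section Orbit

variable {α : Type*} [ConditionallyCompleteLinearOrder α] [TopologicalSpace α] [OrderTopology α]
  {g : α → α} {ξ : α} {x : ℕ → α}

theorem Monotone.tendsto_orbit_of_le_fixedPt (hg : Monotone g) (hgc : Continuous g)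
    (hξ : g ξ = ξ) (hx0 : x 0 ≤ ξ) (hlt : ∀ y, x 0 ≤ y → y < ξ → y < g y)
    (hrec : ∀ n, x (n + 1) = g (x n)) : Tendsto x atTop (𝓝 ξ) := by
  have hle : ∀ y, x 0 ≤ y → y ≤ ξ → y ≤ g y := fun y h0 hy =>
    hy.lt_or_eq.elim (fun hy => (hlt y h0 hy).le) fun hy => hy ▸ hξ.ge
  have hbound : ∀ n, x 0 ≤ x n ∧ x n ≤ ξ := by
    intro n
    induction n with
    | zero => exact ⟨le_rfl, hx0⟩
    | succ n ih =>
      rw [hrec n]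
      exact ⟨ih.1.trans (hle _ ih.1 ih.2), hξ ▸ hg ih.2⟩
  have hmono : Monotone x :=
    monotone_nat_of_le_succ fun n => hrec n ▸ hle _ (hbound n).1 (hbound n).2
  have hbdd : BddAbove (range x) := ⟨ξ, forall_mem_range.2 fun n => (hbound n).2⟩
  set L := ⨆ n, x n
  have hL : Tendsto x atTop (𝓝 L) := tendsto_atTop_ciSup hmono hbdd
  have hfix : g L = L := by
    refine tendsto_nhds_unique ?_ (hL.comp (tendsto_add_atTop_nat 1))
    simpa only [Function.comp_def, hrec] using (hgc.tendsto L).comp hL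
  have hLξ : L ≤ ξ := ciSup_le fun n => (hbound n).2
  obtain rfl : L = ξ := hLξ.eq_of_not_lt fun h =>
    (hlt L (le_ciSup hbdd 0) h).ne' hfix
  exact hL

theorem Monotone.tendsto_orbit_of_fixedPt_le (hg : Monotone g) (hgc : Continuous g)
    (hξ : g ξ = ξ) (hx0 : ξ ≤ x 0) (hlt : ∀ y, y ≤ x 0 → ξ < y → g y < y)
    (hrec : ∀ n, x (n + 1) = g (x n)) : Tendsto x atTop (𝓝 ξ) :=
  Monotone.tendsto_orbit_of_le_fixedPt (α := αᵒᵈ) hg.dual hgc hξ hx0 hlt hrec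

end Orbit

theorem StrictConcaveOn.div_strictAntiOn {f : ℝ → ℝ} (hf : StrictConcaveOn ℝ (Ici 0) f)
    (hf0 : f 0 = 0) : StrictAntiOn (fun u => f u / u) (Ioi 0) := by
  intro u hu v hv huv
  simpa [hf0] using hf.secant_strict_mono self_mem_Ici (Ioi_subset_Ici_self hu)
    (Ioi_subset_Ici_self hv) (ne_of_gt hu) (ne_of_gt hv) huv

theorem StrictConcaveOn.lt_map_mul_of_lt {f : ℝ → ℝ} (hf : StrictConcaveOn ℝ (Ici 0) f)
    (hf0 : f 0 = 0) {a ξ y : ℝ} (ha : 0 < a) (hξ : f (a * ξ) = ξ) (hy : 0 < y) (hyξ : y < ξ) :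
    y < f (a * y) := by
  have h := hf.div_strictAntiOn hf0 (mul_pos ha hy) (mul_pos ha (hy.trans hyξ))
    (mul_lt_mul_of_pos_left hyξ ha)
  simp only at h
  rw [hξ, div_lt_div_iff₀ (mul_pos ha (hy.trans hyξ)) (mul_pos ha hy)] at h
  exact lt_of_mul_lt_mul_right (by linarith : y * (a * ξ) < f (a * y) * (a * ξ))
    (mul_pos ha (hy.trans hyξ)).le

theorem StrictConcaveOn.map_mul_lt_of_lt {f : ℝ → ℝ} (hf : StrictConcaveOn ℝ (Ici 0) f)
    (hf0 : f 0 = 0) {a ξ y : ℝ} (ha : 0 < a) (hξ0 : 0 < ξ) (hξ : f (a * ξ) = ξ) (hξy : ξ < y) :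
    f (a * y) < y := by
  have h := hf.div_strictAntiOn hf0 (mul_pos ha hξ0) (mul_pos ha (hξ0.trans hξy))
    (mul_lt_mul_of_pos_left hξy ha)
  simp only at h
  rw [hξ, div_lt_div_iff₀ (mul_pos ha (hξ0.trans hξy)) (mul_pos ha hξ0)] at h
  exact lt_of_mul_lt_mul_right (by linarith : f (a * y) * (a * ξ) < y * (a * ξ))
    (mul_pos ha hξ0).le

namespace OddSigmoid

variable {f : ℝ → ℝ}

theorem continuous (hf : OddSigmoid f) : Continuous f := hf.1.continuous

end OddSigmoid

theorem stmt_6_general (f : ℝ → ℝ) (hf : OddSigmoid f) (a : ℝ)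
    (ξ : ℝ) (hξpos : 0 < ξ) (hξfix : f (a * ξ) = ξ)
    (x : ℕ → ℝ) (hx0 : 0 < x 0) (hrec : ∀ n, x (n + 1) = f (a * x n)) :
    Filter.Tendsto x Filter.atTop (nhds ξ) := by
  have hf0 := hf.map_zero
  have ha : 0 < a :=
    pos_of_mul_pos_left (hf.strictMono.lt_iff_lt.1 (by rwa [hf0, hξfix])) hξpos.le
  have hg : Monotone fun y => f (a * y) := fun y z h =>
    hf.strictMono.monotone (mul_le_mul_of_nonneg_left h ha.le)
  have hgc : Continuous fun y => f (a * y) := hf.continuous.comp (continuous_const_mul a)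
  rcases le_total (x 0) ξ with hbelow | habove
  · exact hg.tendsto_orbit_of_le_fixedPt hgc hξfix hbelow (fun y hy hyξ =>
      hf.strictConcaveOn.lt_map_mul_of_lt hf0 ha hξfix (hx0.trans_le hy) hyξ) hrec
  · exact hg.tendsto_orbit_of_fixedPt_le hgc hξfix habove (fun y _ hξy =>
      hf.strictConcaveOn.map_mul_lt_of_lt hf0 ha hξpos hξfix hξy) hrec

theorem stmt_6 (f : ℝ → ℝ) (hf : OddSigmoid f) (a : ℝ) (haw : 1 / deriv f 0 < a)
    (ξ : ℝ) (hξpos : 0 < ξ) (hξfix : f (a * ξ) = ξ)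
    (hξuniq : ∀ y : ℝ, 0 < y → f (a * y) = y → y = ξ)
    (x : ℕ → ℝ) (hx0 : 0 < x 0) (hrec : ∀ n, x (n + 1) = f (a * x n)) :
    Filter.Tendsto x Filter.atTop (nhds ξ) :=
  stmt_6_general f hf a ξ hξpos hξfix x hx0 hrec
end

section
/- Let f be an odd-sigmoid function, x₀ > 0, and let a₁,…,a_m be positive reals with a_min := min{a₁,…,a_m}. With φ_a(x) := f(a x), one has φ_{a_1} ∘ ⋯ ∘ φ_{a_m}(x₀) ≥ φ_{a_min}^{∘m}(x₀), the m-fold composition of φ_{a_min}. -/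
open Set Filter Topology

/-! Since `f` is monotone with `f 0 = 0`, every `φ_c = f (c * ·)` with `c ≥ 0` maps `[0, ∞)` into
itself and is monotone there in both `c` and its argument; so lowering the scales to `a_min`
one layer at a time can only decrease the composition. -/

namespace OddSigmoid

variable {f : ℝ → ℝ}

theorem monotone (hf : OddSigmoid f) : Monotone f :=
  (strictMono_of_deriv_pos hf.2.2.2.1).monotone

end OddSigmoid

section ScaledComposition

variable {f : ℝ → ℝ}

theorem foldr_scaled_nonneg (hf : Monotone f) (hf0 : f 0 = 0) {x : ℝ} (hx : 0 ≤ x) :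
    ∀ l : List ℝ, (∀ c ∈ l, 0 ≤ c) → 0 ≤ l.foldr (fun c y => f (c * y)) x
  | [], _ => hx
  | c :: l, hl => by
    have hc : 0 ≤ c := hl c List.mem_cons_self
    have ih := foldr_scaled_nonneg hf hf0 hx l fun d hd => hl d (List.mem_cons_of_mem _ hd)
    simpa only [List.foldr_cons, hf0] using hf (mul_nonneg hc ih)

theorem iterate_scaled_le_foldr (hf : Monotone f) (hf0 : f 0 = 0) {a x : ℝ} (ha : 0 ≤ a)
    (hx : 0 ≤ x) :
    ∀ l : List ℝ, (∀ c ∈ l, a ≤ c) →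
      (fun y => f (a * y))^[l.length] x ≤ l.foldr (fun c y => f (c * y)) x
  | [], _ => le_rfl
  | c :: l, hl => by
    have hc : a ≤ c := hl c List.mem_cons_self
    have hl' : ∀ d ∈ l, a ≤ d := fun d hd => hl d (List.mem_cons_of_mem _ hd)
    have ih := iterate_scaled_le_foldr hf hf0 ha hx l hl'
    have hy : 0 ≤ l.foldr (fun c y => f (c * y)) x :=
      foldr_scaled_nonneg hf hf0 hx l fun d hd => ha.trans (hl' d hd)
    rw [List.length_cons, Function.iterate_succ_apply', List.foldr_cons]
    exact hf ((mul_le_mul_of_nonneg_left ih ha).trans (mul_le_mul_of_nonneg_right hc hy))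

end ScaledComposition

theorem stmt_11 (f : ℝ → ℝ) (hf : OddSigmoid f) (x₀ : ℝ) (hx₀ : 0 < x₀)
    (l : List ℝ) (hl : ∀ c ∈ l, 0 < c) (amin : ℝ) (hmem : amin ∈ l)
    (hmin : ∀ c ∈ l, amin ≤ c) :
    (fun x => f (amin * x))^[l.length] x₀ ≤ l.foldr (fun c y => f (c * y)) x₀ :=
  iterate_scaled_le_foldr hf.monotone hf.map_zero (hl amin hmem).le hx₀.le l hmin
end
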